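/- Path construction lemma: Let R₁ = [0,a] × [0,b] with a,b ∈ [0,1], with the grids 𝒢ₙ = {(k·2^{-4n}, ℓ·2^{-2n}) : k,ℓ ∈ ℕ} and 𝒢 = ∪ₙ 𝒢ₙ. Given p¹, p² ∈ 𝒢 ∩ R₁, let n₀ be the integer part of log₂(1/Δ(p¹ - p²)). Then p¹ and p² can be joined by a path of line segments, each segment joining nearest neighbors in 𝒢ₙ for some n ≥ n₀, such that for each n ≥ n₀ there are at most 40 segments of type n in the path. -/

import Mathlib

/-- The parabolic gauge `Δ(t,x) = max(|t|^{1/4}, |x|^{1/2})`. -/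
noncomputable def Delta (p : ℝ × ℝ) : ℝ :=
  max (|p.1| ^ ((1 : ℝ) / 4)) (|p.2| ^ ((1 : ℝ) / 2))

/-- The anisotropic grid `𝒢ₙ = {(k 2^{-4n}, ℓ 2^{-2n}) : k, ℓ ∈ ℕ}`. -/
def grid (n : ℕ) : Set (ℝ × ℝ) :=
  {p | ∃ k l : ℕ, p = ((k : ℝ) * 2 ^ (-(4 * n : ℤ)), (l : ℝ) * 2 ^ (-(2 * n : ℤ)))}

/-- `p` and `q` are nearest neighbors in `𝒢ₙ`: they differ by `2^{-4n}` in the first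
coordinate or by `2^{-2n}` in the second coordinate. -/
def IsNN (n : ℕ) (p q : ℝ × ℝ) : Prop :=
  (|p.1 - q.1| = 2 ^ (-(4 * n : ℤ)) ∧ p.2 = q.2) ∨
  (p.1 = q.1 ∧ |p.2 - q.2| = 2 ^ (-(2 * n : ℤ)))

/-!
Refine `p` and `q` to a common level `n₀ + d`. At each level a point of the grid is reached from
its parent one level coarser by at most `15` horizontal and `3` vertical steps, so each point is
joined to its ancestor of level `n₀` with at most `18` steps of every type in `(n₀, n₀ + d]`.
Since `Δ(p - q) ≤ 2^{-n₀}`, the two ancestors differ by at most one cell in each coordinate and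
are joined by two steps of type `n₀`. Hence each type occurs at most `18 + 18 + 2 ≤ 40` times.
-/

/-- `TypedChain R c x y`: `x` and `y` are joined by a finite chain of steps `R k`, in which
the number of steps of type `k` is at most `c k`. -/
inductive TypedChain {α : Type*} (R : ℕ → α → α → Prop) : (ℕ → ℕ) → α → α → Prop
  | refl (x : α) : TypedChain R 0 x x
  | cons {k : ℕ} {c : ℕ → ℕ} {x y z : α} :
      R k x y → TypedChain R c y z → TypedChain R (Pi.single k 1 + c) x z
  | mono {c c' : ℕ → ℕ} {x y : α} : TypedChain R c x y → c ≤ c' → TypedChain R c' x y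

namespace TypedChain

variable {α : Type*} {R : ℕ → α → α → Prop} {c c' : ℕ → ℕ} {x y z : α}

theorem single {k : ℕ} (h : R k x y) : TypedChain R (Pi.single k 1) x y := by
  simpa using cons h (refl y)

theorem trans (h₁ : TypedChain R c x y) (h₂ : TypedChain R c' y z) :
    TypedChain R (c + c') x z := by
  induction h₁ with
  | refl => simpa using h₂
  | cons hxy _ ih => simpa only [add_assoc] using cons hxy (ih h₂)
  | mono _ hle ih => exact mono (ih h₂) (add_le_add_left hle _)

theorem symm (h : TypedChain R c x y) (hR : ∀ k x y, R k x y → R k y x) :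
    TypedChain R c y x := by
  induction h with
  | refl => exact refl _
  | cons hxy _ ih => simpa only [add_comm] using ih.trans (single (hR _ _ _ hxy))
  | mono _ hle ih => exact mono ih hle

theorem of_succ {n k k' : ℕ} (f : ℕ → α) (hkk' : k ≤ k')
    (hf : ∀ j, k ≤ j → j < k' → R n (f j) (f (j + 1))) :
    TypedChain R (Pi.single n (k' - k)) (f k) (f k') := by
  induction k', hkk' using Nat.le_induction with
  | base => simpa using refl (f k)
  | succ k' hkk' ih =>
    have := (ih fun j hj hj' => hf j hj (by omega)).trans (single (hf k' hkk' (by omega)))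
    rwa [← Pi.single_add, show k' - k + 1 = k' + 1 - k by omega] at this

theorem exists_path (h : TypedChain R c x y) :
    ∃ (m : ℕ) (path : ℕ → α) (typ : ℕ → ℕ), path 0 = x ∧ path m = y ∧
      (∀ i < m, R (typ i) (path i) (path (i + 1))) ∧
      ∀ n, ((Finset.range m).filter (fun i => typ i = n)).card ≤ c n := by
  induction h with
  | refl x => exact ⟨0, fun _ => x, fun _ => 0, rfl, rfl, by simp, by simp⟩
  | @cons k c x y z hxy _ ih =>
    obtain ⟨m, path, typ, h0, hm, hR, hcount⟩ := ih
    refine ⟨m + 1, fun | 0 => x | i + 1 => path i, fun | 0 => k | i + 1 => typ i,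
      rfl, hm, ?_, fun n => ?_⟩
    · rintro (_ | i) hi
      · simpa [h0] using hxy
      · exact hR i (by omega)
    · have := hcount n
      rw [Finset.card_filter] at this ⊢
      rw [Finset.sum_range_succ']
      simp only [Pi.add_apply, Pi.single_apply, eq_comm (a := k)]
      omega
  | mono _ hle ih =>
    obtain ⟨m, path, typ, h0, hm, hR, hcount⟩ := ih
    exact ⟨m, path, typ, h0, hm, hR, fun n => (hcount n).trans (hle n)⟩

end TypedChain

noncomputable def gridPt (n k l : ℕ) : ℝ × ℝ :=
  ((k : ℝ) * 2 ^ (-(4 * n : ℤ)), (l : ℝ) * 2 ^ (-(2 * n : ℤ)))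

def gridBox (a b : ℝ) : Set (ℝ × ℝ) :=
  (⋃ n, grid n) ∩ Set.Icc 0 a ×ˢ Set.Icc 0 b

def GridStep (n₀ : ℕ) (S : Set (ℝ × ℝ)) (k : ℕ) (x y : ℝ × ℝ) : Prop :=
  n₀ ≤ k ∧ x ∈ S ∧ y ∈ S ∧ IsNN k x y

theorem IsNN.symm {k : ℕ} {x y : ℝ × ℝ} (h : IsNN k x y) : IsNN k y x := by
  rcases h with ⟨h₁, h₂⟩ | ⟨h₁, h₂⟩
  · exact .inl ⟨by rwa [abs_sub_comm], h₂.symm⟩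
  · exact .inr ⟨h₁.symm, by rwa [abs_sub_comm]⟩

theorem GridStep.symm {n₀ : ℕ} {S : Set (ℝ × ℝ)} {k : ℕ} {x y : ℝ × ℝ}
    (h : GridStep n₀ S k x y) : GridStep n₀ S k y x :=
  ⟨h.1, h.2.2.1, h.2.1, h.2.2.2.symm⟩

theorem two_zpow_neg_mul_add (c n d : ℕ) :
    (2 : ℝ) ^ (-(c * (n + d : ℕ) : ℤ)) * ((2 : ℝ) ^ c) ^ d = 2 ^ (-(c * n : ℤ)) := by
  rw [← pow_mul, ← zpow_natCast, ← zpow_add₀ two_ne_zero]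
  congr 1
  push_cast
  ring

theorem gridPt_mul_pow (n d k l : ℕ) :
    gridPt (n + d) (k * 16 ^ d) (l * 4 ^ d) = gridPt n k l := by
  have h₄ : (2 : ℝ) ^ (-(4 * (n + d : ℕ) : ℤ)) * 16 ^ d = 2 ^ (-(4 * n : ℤ)) := by
    exact_mod_cast two_zpow_neg_mul_add 4 n d
  have h₂ : (2 : ℝ) ^ (-(2 * (n + d : ℕ) : ℤ)) * 4 ^ d = 2 ^ (-(2 * n : ℤ)) := by
    exact_mod_cast two_zpow_neg_mul_add 2 n d
  simp only [gridPt, Nat.cast_mul, Nat.cast_pow, Nat.cast_ofNat, Prod.mk.injEq]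
  constructor
  · linear_combination (k : ℝ) * h₄
  · linear_combination (l : ℝ) * h₂

theorem gridPt_mono {n k k' l l' : ℕ} (hk : k ≤ k') (hl : l ≤ l') :
    gridPt n k l ≤ gridPt n k' l' :=
  Prod.mk_le_mk.2 ⟨by gcongr, by gcongr⟩

theorem gridPt_div_pow_le (n d k l : ℕ) :
    gridPt n (k / 16 ^ d) (l / 4 ^ d) ≤ gridPt (n + d) k l := by
  rw [← gridPt_mul_pow n d]
  exact gridPt_mono (Nat.div_mul_le_self _ _) (Nat.div_mul_le_self _ _)

theorem isNN_gridPt_succ_fst (n k l : ℕ) : IsNN n (gridPt n k l) (gridPt n (k + 1) l) := by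
  refine .inl ⟨?_, rfl⟩
  simp only [gridPt, Nat.cast_succ]
  rw [show (k : ℝ) * _ - (k + 1) * _ = -2 ^ (-(4 * n : ℤ)) by ring, abs_neg,
    abs_of_pos (by positivity)]

theorem isNN_gridPt_succ_snd (n k l : ℕ) : IsNN n (gridPt n k l) (gridPt n k (l + 1)) := by
  refine .inr ⟨rfl, ?_⟩
  simp only [gridPt, Nat.cast_succ]
  rw [show (l : ℝ) * _ - (l + 1) * _ = -2 ^ (-(2 * n : ℤ)) by ring, abs_neg,
    abs_of_pos (by positivity)]

section gridBox

variable {a b : ℝ}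

theorem le_of_mem_gridBox {x : ℝ × ℝ} (hx : x ∈ gridBox a b) : x ≤ (a, b) :=
  Prod.mk_le_mk.2 ⟨hx.2.1.2, hx.2.2.2⟩

theorem gridPt_mem_gridBox_iff {n k l : ℕ} :
    gridPt n k l ∈ gridBox a b ↔ gridPt n k l ≤ (a, b) :=
  ⟨le_of_mem_gridBox, fun h => ⟨Set.mem_iUnion.2 ⟨n, k, l, rfl⟩,
    ⟨by simp only [gridPt]; positivity, (Prod.mk_le_mk.1 h).1⟩,
    ⟨by simp only [gridPt]; positivity, (Prod.mk_le_mk.1 h).2⟩⟩⟩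

theorem gridPt_mem_gridBox_of_le {n k l : ℕ} {x : ℝ × ℝ} (h : gridPt n k l ≤ x)
    (hx : x ∈ gridBox a b) : gridPt n k l ∈ gridBox a b :=
  gridPt_mem_gridBox_iff.2 (h.trans (le_of_mem_gridBox hx))

end gridBox

theorem exists_gridPt_eq_of_mem_grid {m N : ℕ} {p : ℝ × ℝ} (hp : p ∈ grid m) (hmN : m ≤ N) :
    ∃ k l, p = gridPt N k l := by
  obtain ⟨e, rfl⟩ := Nat.exists_eq_add_of_le hmN
  obtain ⟨k, l, rfl⟩ := hp
  exact ⟨k * 16 ^ e, l * 4 ^ e, (gridPt_mul_pow m e k l).symm⟩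

theorem exists_gridPt_eq_add {p q : ℝ × ℝ} (hp : p ∈ ⋃ n, grid n) (hq : q ∈ ⋃ n, grid n)
    (n : ℕ) : ∃ d kp lp kq lq, p = gridPt (n + d) kp lp ∧ q = gridPt (n + d) kq lq := by
  obtain ⟨mp, hp⟩ := Set.mem_iUnion.1 hp
  obtain ⟨mq, hq⟩ := Set.mem_iUnion.1 hq
  obtain ⟨kp, lp, rfl⟩ := exists_gridPt_eq_of_mem_grid hp (by omega : mp ≤ n + (mp + mq))
  obtain ⟨kq, lq, rfl⟩ := exists_gridPt_eq_of_mem_grid hq (by omega : mq ≤ n + (mp + mq))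
  exact ⟨mp + mq, kp, lp, kq, lq, rfl, rfl⟩

section chains

variable {a b : ℝ} {n₀ n : ℕ}

theorem chain_horizontal {k k' l : ℕ} (hn : n₀ ≤ n) (hk : gridPt n k l ∈ gridBox a b)
    (hk' : gridPt n k' l ∈ gridBox a b) :
    TypedChain (GridStep n₀ (gridBox a b)) (Pi.single n (k' - k + (k - k')))
      (gridPt n k l) (gridPt n k' l) := by
  wlog hkk' : k ≤ k' generalizing k k'
  · rw [add_comm]
    exact (this hk' hk (by omega)).symm fun _ _ _ => GridStep.symm
  have hmem (j : ℕ) (hj : j ≤ k') : gridPt n j l ∈ gridBox a b :=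
    gridPt_mem_gridBox_of_le (gridPt_mono hj le_rfl) hk'
  rw [Nat.sub_eq_zero_of_le hkk', add_zero]
  exact TypedChain.of_succ (fun j => gridPt n j l) hkk' fun j _ hj =>
    ⟨hn, hmem j hj.le, hmem (j + 1) hj, isNN_gridPt_succ_fst n j l⟩

theorem chain_vertical {k l l' : ℕ} (hn : n₀ ≤ n) (hl : gridPt n k l ∈ gridBox a b)
    (hl' : gridPt n k l' ∈ gridBox a b) :
    TypedChain (GridStep n₀ (gridBox a b)) (Pi.single n (l' - l + (l - l')))
      (gridPt n k l) (gridPt n k l') := by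
  wlog hll' : l ≤ l' generalizing l l'
  · rw [add_comm]
    exact (this hl' hl (by omega)).symm fun _ _ _ => GridStep.symm
  have hmem (j : ℕ) (hj : j ≤ l') : gridPt n k j ∈ gridBox a b :=
    gridPt_mem_gridBox_of_le (gridPt_mono le_rfl hj) hl'
  rw [Nat.sub_eq_zero_of_le hll', add_zero]
  exact TypedChain.of_succ (fun j => gridPt n k j) hll' fun j _ hj =>
    ⟨hn, hmem j hj.le, hmem (j + 1) hj, isNN_gridPt_succ_snd n k j⟩

theorem chain_of_le_add_one {i i' j j' : ℕ} (hn : n₀ ≤ n) (hi : i ≤ i' + 1) (hi' : i' ≤ i + 1)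
    (hj : j ≤ j' + 1) (hj' : j' ≤ j + 1) (h : gridPt n i j ∈ gridBox a b)
    (h' : gridPt n i' j' ∈ gridBox a b) :
    TypedChain (GridStep n₀ (gridBox a b)) (Pi.single n 2) (gridPt n i j) (gridPt n i' j') := by
  have hc : gridPt n i' j ∈ gridBox a b := gridPt_mem_gridBox_iff.2 <|
    Prod.mk_le_mk.2 ⟨(Prod.mk_le_mk.1 (le_of_mem_gridBox h')).1,
      (Prod.mk_le_mk.1 (le_of_mem_gridBox h)).2⟩
  refine ((chain_horizontal hn h hc).trans (chain_vertical hn hc h')).mono fun m => ?_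
  simp only [Pi.add_apply, Pi.single_apply]
  split_ifs <;> omega

theorem chain_parent {k l : ℕ} (hn : n₀ ≤ n + 1) (h : gridPt (n + 1) k l ∈ gridBox a b) :
    TypedChain (GridStep n₀ (gridBox a b)) (Pi.single (n + 1) 18)
      (gridPt n (k / 16) (l / 4)) (gridPt (n + 1) k l) := by
  have hparent : gridPt n (k / 16) (l / 4) = gridPt (n + 1) (k / 16 * 16) (l / 4 * 4) := by
    simpa using (gridPt_mul_pow n 1 (k / 16) (l / 4)).symm
  have hmem {k' l' : ℕ} (hk : k' ≤ k) (hl : l' ≤ l) : gridPt (n + 1) k' l' ∈ gridBox a b :=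
    gridPt_mem_gridBox_of_le (gridPt_mono hk hl) h
  rw [hparent]
  refine ((chain_horizontal hn (hmem (Nat.div_mul_le_self k 16) (Nat.div_mul_le_self l 4))
    (hmem le_rfl (Nat.div_mul_le_self l 4))).trans (chain_vertical hn (hmem le_rfl
      (Nat.div_mul_le_self l 4)) h)).mono fun m => ?_
  simp only [Pi.add_apply, Pi.single_apply]
  split_ifs <;> omega

theorem chain_ancestor {k l : ℕ} (hn : n₀ ≤ n) (d : ℕ) (h : gridPt (n + d) k l ∈ gridBox a b) :
    TypedChain (GridStep n₀ (gridBox a b)) (fun m => if n < m ∧ m ≤ n + d then 18 else 0)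
      (gridPt n (k / 16 ^ d) (l / 4 ^ d)) (gridPt (n + d) k l) := by
  induction d generalizing k l with
  | zero =>
    simpa using (TypedChain.refl (gridPt n k l)).mono (R := GridStep n₀ (gridBox a b))
      fun _ => Nat.zero_le _
  | succ d ih =>
    have hparent : gridPt (n + d) (k / 16) (l / 4) ∈ gridBox a b :=
      gridPt_mem_gridBox_of_le (by simpa [← add_assoc] using gridPt_div_pow_le (n + d) 1 k l) h
    have := (ih hparent).trans (chain_parent (by omega) h)
    rw [Nat.div_div_eq_div_mul, Nat.div_div_eq_div_mul, ← pow_succ', ← pow_succ'] at this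
    refine this.mono fun m => ?_
    simp only [Pi.add_apply, Pi.single_apply]
    split_ifs <;> omega

end chains

theorem Nat.div_le_div_add_one_of_le_add {m m' c : ℕ} (hc : 0 < c) (h : m ≤ m' + c) :
    m / c ≤ m' / c + 1 :=
  (Nat.div_le_div_right h).trans_eq (Nat.add_div_right m' hc)

theorem le_add_pow_of_abs_sub_le {c n d k k' : ℕ}
    (h : |(k : ℝ) * 2 ^ (-(c * (n + d : ℕ) : ℤ)) - k' * 2 ^ (-(c * (n + d : ℕ) : ℤ))| ≤
      2 ^ (-(c * n : ℤ))) : k ≤ k' + (2 ^ c) ^ d := by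
  have hpos : (0 : ℝ) < 2 ^ (-(c * (n + d : ℕ) : ℤ)) := by positivity
  rw [← two_zpow_neg_mul_add c n d, ← sub_mul, abs_mul, abs_of_pos hpos] at h
  have := (abs_le.1 (le_of_mul_le_mul_right (h.trans_eq (mul_comm _ _)) hpos)).2
  exact_mod_cast sub_le_iff_le_add'.1 this

theorem chain_of_abs_sub_le {a b : ℝ} {n : ℕ} {p q : ℝ × ℝ} (hp : p ∈ gridBox a b)
    (hq : q ∈ gridBox a b) (h₁ : |p.1 - q.1| ≤ 2 ^ (-(4 * n : ℤ)))
    (h₂ : |p.2 - q.2| ≤ 2 ^ (-(2 * n : ℤ))) :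
    TypedChain (GridStep n (gridBox a b)) (fun _ => 40) p q := by
  obtain ⟨d, kp, lp, kq, lq, rfl, rfl⟩ := exists_gridPt_eq_add hp.1 hq.1 n
  have hk := le_add_pow_of_abs_sub_le (c := 4) h₁
  have hk' := le_add_pow_of_abs_sub_le (c := 4) ((abs_sub_comm _ _).trans_le h₁)
  have hl := le_add_pow_of_abs_sub_le (c := 2) h₂
  have hl' := le_add_pow_of_abs_sub_le (c := 2) ((abs_sub_comm _ _).trans_le h₂)
  norm_num at hk hk' hl hl'
  have hpos₄ : 0 < 16 ^ d := by positivity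
  have hpos₂ : 0 < 4 ^ d := by positivity
  have hanc (k l : ℕ) (h : gridPt (n + d) k l ∈ gridBox a b) :
      gridPt n (k / 16 ^ d) (l / 4 ^ d) ∈ gridBox a b :=
    gridPt_mem_gridBox_of_le (gridPt_div_pow_le n d k l) h
  have hjoin := chain_of_le_add_one le_rfl (Nat.div_le_div_add_one_of_le_add hpos₄ hk)
    (Nat.div_le_div_add_one_of_le_add hpos₄ hk') (Nat.div_le_div_add_one_of_le_add hpos₂ hl)
    (Nat.div_le_div_add_one_of_le_add hpos₂ hl') (hanc kp lp hp) (hanc kq lq hq)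
  have hdown := (chain_ancestor le_rfl d hp).symm fun _ _ _ => GridStep.symm
  refine (hdown.trans (hjoin.trans (chain_ancestor le_rfl d hq))).mono fun m => ?_
  simp only [Pi.add_apply, Pi.single_apply]
  split_ifs <;> omega

theorem Delta_le_one {v : ℝ × ℝ} (h₁ : |v.1| ≤ 1) (h₂ : |v.2| ≤ 1) : Delta v ≤ 1 :=
  max_le (Real.rpow_le_one (abs_nonneg _) h₁ (by norm_num))
    (Real.rpow_le_one (abs_nonneg _) h₂ (by norm_num))

theorem Delta_le_inv_two_pow_floor_logb {v : ℝ × ℝ} (hv : Delta v ≤ 1) :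
    Delta v ≤ ((2 : ℝ) ^ ⌊Real.logb 2 (1 / Delta v)⌋₊)⁻¹ := by
  have hΔ : 0 ≤ Delta v := le_max_of_le_left (by positivity)
  rcases hΔ.eq_or_lt with h | h
  · rw [← h]; positivity
  rw [le_inv_comm₀ h (by positivity), ← one_div, ← Real.rpow_natCast,
    ← Real.le_logb_iff_rpow_le one_lt_two (by positivity)]
  exact Nat.floor_le (Real.logb_nonneg one_lt_two ((one_le_div h).2 hv))

theorem le_two_zpow_of_rpow_le {x : ℝ} {c n : ℕ} (hc : 0 < c) (hx : 0 ≤ x)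
    (h : x ^ ((1 : ℝ) / c) ≤ ((2 : ℝ) ^ n)⁻¹) : x ≤ 2 ^ (-(c * n : ℤ)) := by
  rw [one_div, Real.rpow_inv_le_iff_of_pos hx (by positivity) (by positivity),
    Real.rpow_natCast, ← inv_pow, ← pow_mul, ← zpow_natCast, inv_zpow'] at h
  convert h using 2
  push_cast
  ring

/-- Path construction lemma: any two points of `𝒢 ∩ R₁` can be joined by a chain of
nearest-neighbor steps, each of some type `n ≥ n₀`, with at most 40 steps of each type. -/
theorem path_construction (a b : ℝ) (ha : a ∈ Set.Icc (0:ℝ) 1) (hb : b ∈ Set.Icc (0:ℝ) 1)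
    (R₁ : Set (ℝ × ℝ)) (hR₁ : R₁ = Set.Icc 0 a ×ˢ Set.Icc 0 b)
    (p q : ℝ × ℝ) (hp : p ∈ (⋃ n, grid n) ∩ R₁) (hq : q ∈ (⋃ n, grid n) ∩ R₁) :
    ∃ (m : ℕ) (path : ℕ → ℝ × ℝ) (typ : ℕ → ℕ),
      path 0 = p ∧ path m = q ∧
      (∀ i < m, ⌊Real.logb 2 (1 / Delta (p - q))⌋₊ ≤ typ i ∧
        path i ∈ (⋃ n, grid n) ∩ R₁ ∧ path (i + 1) ∈ (⋃ n, grid n) ∩ R₁ ∧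
        IsNN (typ i) (path i) (path (i + 1))) ∧
      (∀ n : ℕ, ((Finset.range m).filter (fun i => typ i = n)).card ≤ 40) := by
  subst hR₁
  obtain ⟨hp₁, hp₂⟩ := hp.2
  obtain ⟨hq₁, hq₂⟩ := hq.2
  have hΔ := Delta_le_inv_two_pow_floor_logb (v := p - q)
    (Delta_le_one (abs_sub_le_of_nonneg_of_le hp₁.1 (hp₁.2.trans ha.2) hq₁.1 (hq₁.2.trans ha.2))
      (abs_sub_le_of_nonneg_of_le hp₂.1 (hp₂.2.trans hb.2) hq₂.1 (hq₂.2.trans hb.2)))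
  exact (chain_of_abs_sub_le hp hq
    (le_two_zpow_of_rpow_le (c := 4) (by norm_num) (abs_nonneg _) ((le_max_left _ _).trans hΔ))
    (le_two_zpow_of_rpow_le (c := 2) (by norm_num) (abs_nonneg _) ((le_max_right _ _).trans hΔ))
    ).exists_path
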